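/- Let r ∈ 2^ω be a real and n < ω. (1) If φ(x) is a Σ¹ₙ formula of the form ∃y₀∀y₁⋯ψ(x,y₀,y₁,…) with ψ arithmetic, then the maximal condition of ℂ_{ω₁} forces φ(ř) if and only if there is a countable linear order A₀ and a ℂ_{A₀}-name ẏ₀ such that for every countable linear order A₁ with A₀ ≤ A₁ and every ℂ_{A₁}-name ẏ₁ there is a countable linear order A₂ with A₁ ≤ A₂ and a ℂ_{A₂}-name ẏ₂ such that …, such that the maximal condition of ℂ_{A_{n-1}} forces ψ(ř, ẏ₀, ẏ₁, …). (2) Dually, if φ(x) is a Π¹ₙ formula of the form ∀y₀∃y₁⋯ψ(x,y₀,y₁,…), then ℂ_{ω₁} forces φ(ř) if and only if for every countable linear order A₀ and every ℂ_{A₀}-name ẏ₀ there is a countable linear order A₁ with A₀ ≤ A₁ and a ℂ_{A₁}-name ẏ₁ such that for every countable linear order A₂ with A₁ ≤ A₂ and every ℂ_{A₂}-name ẏ₂ …, such that the maximal condition of ℂ_{A_{n-1}} forces ψ(ř, ẏ₀, ẏ₁, …). -/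

import Mathlib

open scoped Classical

/-! # Core framework: second-order logic over levels of Gödel's `L` -/

/-- The von Neumann natural numbers inside `ZFSet`. -/
noncomputable def natToZF : ℕ → ZFSet.{0}
  | 0 => ∅
  | n+1 => insert (natToZF n) (natToZF n)

/-- Formulas of second-order logic in the language of set theory (de Bruijn indices,
first-order variables and second-order (subset) variables). -/
inductive SOFormula : Type
  | memFF : ℕ → ℕ → SOFormula        -- xᵢ ∈ xⱼ
  | eqFF  : ℕ → ℕ → SOFormula        -- xᵢ = xⱼ
  | memFS : ℕ → ℕ → SOFormula        -- xᵢ ∈ Xⱼ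
  | not   : SOFormula → SOFormula
  | and   : SOFormula → SOFormula → SOFormula
  | allFO : SOFormula → SOFormula
  | exFO  : SOFormula → SOFormula
  | allSO : SOFormula → SOFormula
  | exSO  : SOFormula → SOFormula

/-- Prepend a value to a valuation (de Bruijn style). -/
def consF {α : Sort _} (a : α) (v : ℕ → α) : ℕ → α
  | 0 => a
  | n+1 => v n

/-- Satisfaction of a second-order formula in the structure `(A, ∈)`, where first-order
quantifiers range over the elements of `A`, and second-order quantifiers range over those
subsets `S` of `A` satisfying the predicate `D` (taking `D := fun _ => True` gives full
second-order logic, i.e. quantification over the full powerset of `A`; other choices of `D`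
give the relativization of satisfaction to an inner model or a generic extension). -/
def SOSatIn (D : Set ZFSet.{0} → Prop) (A : ZFSet.{0}) :
    SOFormula → (ℕ → ZFSet.{0}) → (ℕ → Set ZFSet.{0}) → Prop
  | .memFF i j, v, _ => v i ∈ v j
  | .eqFF i j, v, _ => v i = v j
  | .memFS i j, v, V => v i ∈ V j
  | .not φ, v, V => ¬ SOSatIn D A φ v V
  | .and φ ψ, v, V => SOSatIn D A φ v V ∧ SOSatIn D A ψ v V
  | .allFO φ, v, V => ∀ a : ZFSet, a ∈ A → SOSatIn D A φ (consF a v) V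
  | .exFO φ, v, V => ∃ a : ZFSet, a ∈ A ∧ SOSatIn D A φ (consF a v) V
  | .allSO φ, v, V => ∀ S : Set ZFSet, S ⊆ A.toSet → D S → SOSatIn D A φ v (consF S V)
  | .exSO φ, v, V => ∃ S : Set ZFSet, S ⊆ A.toSet ∧ D S ∧ SOSatIn D A φ v (consF S V)

/-- Full (unrelativized) second-order satisfaction over `(A, ∈)`. -/
def SOSat (A : ZFSet.{0}) : SOFormula → (ℕ → ZFSet.{0}) → (ℕ → Set ZFSet.{0}) → Prop :=
  SOSatIn (fun _ => True) A

/-- A formula with no second-order quantifiers ("arithmetic" / second-order quantifier free). -/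
def NoSOQuant : SOFormula → Prop
  | .memFF _ _ => True
  | .eqFF _ _ => True
  | .memFS _ _ => True
  | .not φ => NoSOQuant φ
  | .and φ ψ => NoSOQuant φ ∧ NoSOQuant ψ
  | .allFO φ => NoSOQuant φ
  | .exFO φ => NoSOQuant φ
  | .allSO _ => False
  | .exSO _ => False

mutual
  /-- `Σ¹ₙ` formulas: `n` alternating blocks of second-order quantifiers, starting with `∃`,
  in front of a second-order quantifier free matrix. -/
  inductive IsSigmaSO : ℕ → SOFormula → Prop
    | arith {φ : SOFormula} (n : ℕ) : NoSOQuant φ → IsSigmaSO n φ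
    | exq {n : ℕ} {φ : SOFormula} : IsPiSO n φ → IsSigmaSO (n+1) (SOFormula.exSO φ)
    | exq2 {n : ℕ} {φ : SOFormula} : IsSigmaSO (n+1) φ → IsSigmaSO (n+1) (SOFormula.exSO φ)
  /-- `Π¹ₙ` formulas. -/
  inductive IsPiSO : ℕ → SOFormula → Prop
    | arith {φ : SOFormula} (n : ℕ) : NoSOQuant φ → IsPiSO n φ
    | allq {n : ℕ} {φ : SOFormula} : IsSigmaSO n φ → IsPiSO (n+1) (SOFormula.allSO φ)
    | allq2 {n : ℕ} {φ : SOFormula} : IsPiSO (n+1) φ → IsPiSO (n+1) (SOFormula.allSO φ)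
end

/-- The two pointclasses `Σ` and `Π`. -/
inductive SOClass : Type
  | sigma : SOClass
  | pi : SOClass

/-- `Γ¹ₙ` formulas, for `Γ ∈ {Σ, Π}`. -/
def IsGammaSO : SOClass → ℕ → SOFormula → Prop
  | .sigma => IsSigmaSO
  | .pi => IsPiSO

/-- `x` is a subset of `A` which is definable over `(A, ∈)` by a first-order formula
with parameters from `A`. -/
def DefinableSub (A x : ZFSet.{0}) : Prop :=
  ∃ (φ : SOFormula) (v : ℕ → ZFSet), NoSOQuant φ ∧ (∀ n, v n ∈ A) ∧
    ∀ y, y ∈ x ↔ y ∈ A ∧ SOSat A φ (consF y v) (fun _ => ∅)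

/-- The definable powerset operation. -/
noncomputable def defPow (A : ZFSet.{0}) : ZFSet.{0} :=
  ZFSet.sep (fun x => DefinableSub A x) (ZFSet.powerset A)

/-- The `o`-th level `L_o` of Gödel's constructible hierarchy. -/
noncomputable def LSet (o : Ordinal.{0}) : ZFSet.{0} :=
  Ordinal.limitRecOn o ∅ (fun _ ih => defPow ih)
    (fun o' _ ih => ZFSet.sUnion (ZFSet.range (fun i : o'.ToType =>
      ih ((Ordinal.ToType.mk (o := o')).symm i).1 ((Ordinal.ToType.mk (o := o')).symm i).2)))

/-- A set is constructible if it belongs to some level of the `L`-hierarchy. -/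
def Constructible (x : ZFSet.{0}) : Prop := ∃ o : Ordinal.{0}, x ∈ LSet o

/-- The collection of subsets of the universe that exist in `L`
(used to relativize second-order quantifiers to `L`). -/
def ConstructibleD : Set ZFSet.{0} → Prop :=
  fun S => ∃ z : ZFSet, Constructible z ∧ S = z.toSet

/-- The von Neumann ordinal corresponding to an `Ordinal`. -/
noncomputable def ordToZF (o : Ordinal.{0}) : ZFSet.{0} :=
  ZFSet.range (fun i : o.ToType =>
    have : ((Ordinal.ToType.mk (o := o)).symm i).1 < o := ((Ordinal.ToType.mk (o := o)).symm i).2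
    ordToZF ((Ordinal.ToType.mk (o := o)).symm i).1)
  termination_by o
  decreasing_by exact this

/-- The valuation assigning the (von Neumann codes of the) ordinal parameters
`β 0, …, β (l-1)` to the first `l` first-order variables. -/
noncomputable def paramVal (l : ℕ) (β : ℕ → Ordinal.{0}) : ℕ → ZFSet.{0} :=
  fun i => if i < l then ordToZF (β i) else ∅

/-- `α` is `Γ¹ₙ`-reflecting, with second-order quantifiers relativized to `D`:
for every tuple `β 0 < … < β (l-1) < α` and every `Γ¹ₙ` formula `φ`, if `L_α ⊨ φ(β⃗)`
then there is `α'` with `β (l-1) < α' < α` and `L_{α'} ⊨ φ(β⃗)`. -/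
def ReflectingIn (D : Set ZFSet.{0} → Prop) (Γ : SOClass) (n : ℕ) (α : Ordinal.{0}) : Prop :=
  ∀ (l : ℕ) (β : ℕ → Ordinal.{0}),
    (∀ i j, i < j → j < l → β i < β j) → (∀ i, i < l → β i < α) →
    ∀ φ : SOFormula, IsGammaSO Γ n φ →
      SOSatIn D (LSet α) φ (paramVal l β) (fun _ => ∅) →
      ∃ α' : Ordinal, (∀ i, i < l → β i < α') ∧ α' < α ∧
        SOSatIn D (LSet α') φ (paramVal l β) (fun _ => ∅)

/-- `α` is `Γ¹ₙ`-reflecting (full second-order logic, i.e. computed in `V`). -/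
def Reflecting : SOClass → ℕ → Ordinal.{0} → Prop := ReflectingIn (fun _ => True)

/-- The least `Γ¹ₙ`-reflecting ordinal, relativized to `D`. -/
noncomputable def leastReflecting (D : Set ZFSet.{0} → Prop) (Γ : SOClass) (n : ℕ) :
    Ordinal.{0} :=
  sInf {α | ReflectingIn D Γ n α}

/-- `σ¹ₙ`, the least `Σ¹ₙ`-reflecting ordinal. -/
noncomputable def sigma1 (n : ℕ) : Ordinal.{0} := leastReflecting (fun _ => True) .sigma n

/-- `π¹ₙ`, the least `Π¹ₙ`-reflecting ordinal. -/
noncomputable def pi1 (n : ℕ) : Ordinal.{0} := leastReflecting (fun _ => True) .pi n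

/-- `(σ¹ₙ)^L`. -/
noncomputable def sigma1L (n : ℕ) : Ordinal.{0} := leastReflecting ConstructibleD .sigma n

/-- `(π¹ₙ)^L`. -/
noncomputable def pi1L (n : ℕ) : Ordinal.{0} := leastReflecting ConstructibleD .pi n

/-- The first uncountable ordinal `ω₁` (of `V`). -/
noncomputable def omega1V : Ordinal.{0} := (Cardinal.aleph 1).ord
/-! # Forcing machinery for second-order statements over `L_α` -/

/-- A `P`-name for a subset of a ground-model set: to each ground-model set it assigns
the set of conditions forcing it into the named set. -/
def PName (P : Type*) := ZFSet.{0} → Set P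

/-- The check-name of a ground model set `x` (as a name for a subset of the universe). -/
def checkPName {P : Type*} (x : ZFSet.{0}) : PName P := fun z => {_p : P | z ∈ x}

/-- The empty name. -/
def emptyPName {P : Type*} : PName P := fun _ => (∅ : Set P)

/-- The (strong) forcing relation `p ⊩ φ(v⃗, V⃗)` for second-order formulas over the
structure `(A, ∈)`, where the second-order variables are interpreted by `P`-names for
subsets of `A`.  The clauses are the standard ones: atomic first-order statements about
ground-model sets are decided outright, membership in a name holds iff it holds densely
often, negation means no extension forces the formula, existential quantifiers are
witnessed densely below the condition, and universal second-order quantifiers range over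
all names. -/
def Forces {P : Type*} [Preorder P] (A : ZFSet.{0}) :
    P → SOFormula → (ℕ → ZFSet.{0}) → (ℕ → PName P) → Prop
  | _, .memFF i j, v, _ => v i ∈ v j
  | _, .eqFF i j, v, _ => v i = v j
  | p, .memFS i j, v, V => v i ∈ A ∧ ∀ q ≤ p, ∃ r ≤ q, r ∈ V j (v i)
  | p, .not φ, v, V => ∀ q ≤ p, ¬ Forces A q φ v V
  | p, .and φ ψ, v, V => Forces A p φ v V ∧ Forces A p ψ v V
  | p, .allFO φ, v, V => ∀ a : ZFSet, a ∈ A → Forces A p φ (consF a v) V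
  | p, .exFO φ, v, V => ∀ q ≤ p, ∃ r ≤ q, ∃ a : ZFSet, a ∈ A ∧ Forces A r φ (consF a v) V
  | p, .allSO φ, v, V => ∀ σ : PName P, Forces A p φ v (consF σ V)
  | p, .exSO φ, v, V => ∀ q ≤ p, ∃ r ≤ q, ∃ σ : PName P, Forces A r φ v (consF σ V)

/-- `p ⊩ "α is Γ¹ₙ-reflecting"`, unfolded in the standard way: for all ground-model
parameters `β 0 < … < β (l-1) < α` and every `Γ¹ₙ` formula `φ`, whenever an extension `q`
of `p` forces `L_α ⊨ φ(β⃗)`, then densely below `q` some condition forces `L_{α'} ⊨ φ(β⃗)`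
for some `α'` with `β (l-1) < α' < α`. -/
def ForcesReflectingAt (P : Type*) [Preorder P] (p : P) (Γ : SOClass) (n : ℕ)
    (α : Ordinal.{0}) : Prop :=
  ∀ (l : ℕ) (β : ℕ → Ordinal.{0}),
    (∀ i j, i < j → j < l → β i < β j) → (∀ i, i < l → β i < α) →
    ∀ φ : SOFormula, IsGammaSO Γ n φ →
    ∀ q ≤ p, Forces (LSet α) q φ (paramVal l β) (fun _ => emptyPName) →
      ∀ q' ≤ q, ∃ r ≤ q', ∃ α' : Ordinal, (∀ i, i < l → β i < α') ∧ α' < α ∧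
        Forces (LSet α') r φ (paramVal l β) (fun _ => emptyPName)

/-- The forcing notion `P` forces that `α` is `Γ¹ₙ`-reflecting (equivalently, the maximal
condition forces it; for downwards closed relations this is the same as every condition
forcing it). -/
def ForcesReflecting (P : Type*) [Preorder P] (Γ : SOClass) (n : ℕ) (α : Ordinal.{0}) :
    Prop :=
  ∀ p : P, ForcesReflectingAt P p Γ n α

/-- `p ⊩ "α is not Γ¹ₙ-reflecting"`, unfolded: densely below `p` there are conditions `r`
together with ground-model witnesses `β⃗, φ` such that `r` forces `L_α ⊨ φ(β⃗)` and `r`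
forces `L_{α'} ⊭ φ(β⃗)` for every `α'` with `β (l-1) < α' < α`. -/
def ForcesNotReflectingAt (P : Type*) [Preorder P] (p : P) (Γ : SOClass) (n : ℕ)
    (α : Ordinal.{0}) : Prop :=
  ∀ q ≤ p, ∃ r ≤ q, ∃ (l : ℕ) (β : ℕ → Ordinal.{0}) (φ : SOFormula),
    (∀ i j, i < j → j < l → β i < β j) ∧ (∀ i, i < l → β i < α) ∧ IsGammaSO Γ n φ ∧
    Forces (LSet α) r φ (paramVal l β) (fun _ => emptyPName) ∧
    ∀ α' : Ordinal, (∀ i, i < l → β i < α') → α' < α →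
      Forces (LSet α') r (SOFormula.not φ) (paramVal l β) (fun _ => emptyPName)
/-! # The concrete forcing notions -/

/-- Cohen forcing `ℂ_X`: finite partial functions `X × ω → 2`, coded as finite functional
sets of pairs, ordered by reverse inclusion. -/
def CohenCond (X : Type) : Type :=
  {s : Finset ((X × ℕ) × Bool) // ∀ a b b', (a, b) ∈ s → (a, b') ∈ s → b = b'}

instance CohenCond.preorder (X : Type) : Preorder (CohenCond X) where
  le p q := q.1 ⊆ p.1
  le_refl p := Finset.Subset.refl _
  le_trans p q r h h' := Finset.Subset.trans h' h

/-- The maximal condition (empty function) of Cohen forcing. -/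
def CohenTop (X : Type) : CohenCond X :=
  ⟨∅, by intro a b b' h; simp at h⟩

/-- `p` is a perfect subtree of `2^{<ω}`. -/
def SacksTree (p : Set (List Bool)) : Prop :=
  p.Nonempty ∧ (∀ s t : List Bool, s <+: t → t ∈ p → s ∈ p) ∧
    ∀ t ∈ p, ∃ t' ∈ p, t <+: t' ∧ t' ++ [false] ∈ p ∧ t' ++ [true] ∈ p

/-- Sacks forcing: perfect subtrees of `2^{<ω}` ordered by inclusion. -/
def Sacks : Type := {p : Set (List Bool) // SacksTree p}

instance Sacks.preorder : Preorder Sacks where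
  le p q := p.1 ⊆ q.1
  le_refl p := subset_rfl
  le_trans p q r h h' := Set.Subset.trans h h'

/-- The maximal condition of Sacks forcing: the full binary tree. -/
def SacksTop : Sacks :=
  ⟨Set.univ, ⟨⟨[], trivial⟩, fun _ _ _ _ => trivial,
    fun t _ => ⟨t, trivial, List.prefix_refl t, trivial, trivial⟩⟩⟩

/-- `T` is a Laver tree: a subtree of `ω^{<ω}` with a stem below which every node splits
infinitely. -/
def LaverTree (T : Set (List ℕ)) : Prop :=
  T.Nonempty ∧ (∀ s t : List ℕ, s <+: t → t ∈ T → s ∈ T) ∧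
    ∃ s ∈ T, (∀ t ∈ T, t <+: s ∨ s <+: t) ∧
      ∀ t ∈ T, s <+: t → {n : ℕ | t ++ [n] ∈ T}.Infinite

/-- Laver forcing. -/
def Laver : Type := {T : Set (List ℕ) // LaverTree T}

instance Laver.preorder : Preorder Laver where
  le p q := p.1 ⊆ q.1
  le_refl p := subset_rfl
  le_trans p q r h h' := Set.Subset.trans h h'

/-- `T` is a superperfect (Miller) tree: a subtree of `ω^{<ω}` in which every node extends
to an infinitely splitting node. -/
def MillerTree (T : Set (List ℕ)) : Prop :=
  T.Nonempty ∧ (∀ s t : List ℕ, s <+: t → t ∈ T → s ∈ T) ∧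
    ∀ t ∈ T, ∃ t' ∈ T, t <+: t' ∧ {n : ℕ | t' ++ [n] ∈ T}.Infinite

/-- Miller forcing. -/
def Miller : Type := {T : Set (List ℕ) // MillerTree T}

instance Miller.preorder : Preorder Miller where
  le p q := p.1 ⊆ q.1
  le_refl p := subset_rfl
  le_trans p q r h h' := Set.Subset.trans h h'

/-- A constructible real: a constructible subset of `ω`. -/
def LReal : Type 1 := {x : ZFSet.{0} // x ⊆ ZFSet.omega ∧ Constructible x}

/-- The collapse forcing `ℙ = ℙ^L`: finite sequences of (constructible) reals ordered by
end extension. -/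
def CollapseP : Type 1 := List LReal

instance CollapseP.preorder : Preorder CollapseP where
  le p q := q <+: p
  le_refl p := List.prefix_refl p
  le_trans p q r h h' := List.IsPrefix.trans h' h
/-! # Forcing projective statements about a ground-model real -/

/-- The maximal condition of `ℂ_X` forces the projective statement `φ(ř)` about the
ground model real `r ⊆ ω` (placed as the second-order parameter of `φ`). -/
def CohenForcesProjTop (X : Type) (φ : SOFormula) (r : ZFSet.{0}) : Prop :=
  Forces ZFSet.omega (CohenTop X) φ (fun _ => ∅) (consF (checkPName r) (fun _ => emptyPName))
/-! # Countable linear orders and names for Lemma on `ℂ_{ω₁}` -/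

/-- The image of a Cohen condition under an order embedding of (countable) linear orders
(every countable linear order embeds into `ℚ`, so we represent countable linear orders as
subsets of `ℚ`). -/
def mapCohenCond {A B : Set ℚ} (e : A ↪o B) (p : CohenCond A) : CohenCond B :=
  ⟨p.1.image (fun q => ((e q.1.1, q.1.2), q.2)), by
    intro a b b' hb hb'
    simp only [Finset.mem_image] at hb hb'
    obtain ⟨⟨⟨x, k⟩, c⟩, hmem, heq⟩ := hb
    obtain ⟨⟨⟨x', k'⟩, c'⟩, hmem', heq'⟩ := hb'
    rw [Prod.ext_iff] at heq heq'
    obtain ⟨h1, h2⟩ := heq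
    obtain ⟨h1', h2'⟩ := heq'
    rw [Prod.ext_iff] at h1 h1'
    have hx : x = x' := e.injective (h1.1.trans h1'.1.symm)
    have hk : k = k' := h1.2.trans h1'.2.symm
    subst hx hk
    exact h2.symm.trans ((p.2 _ _ _ hmem hmem').trans h2')⟩

/-- Transfer of a `ℂ_A`-name along an order embedding `A ≤ B`, turning it into a
`ℂ_B`-name. -/
def transferName {A B : Set ℚ} (e : A ↪o B) (σ : PName (CohenCond A)) :
    PName (CohenCond B) :=
  fun z => {q : CohenCond B | ∃ p ∈ σ z, (mapCohenCond e p).1 ⊆ q.1}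

/-- The alternating quantifier-block statement of the lemma: given a list of quantifier
flags (`true` = "there is a countable linear order `B ≥ A` and a `ℂ_B`-name",
`false` = "for every countable linear order `B ≥ A` and every `ℂ_B`-name"), it ends with
"the maximal condition of `ℂ_{A_{n-1}}` forces `ψ` of the accumulated names". -/
def LOGame (ψ : SOFormula) : List Bool → (A : Set ℚ) → (ℕ → PName (CohenCond A)) → Prop
  | [], A, V => Forces ZFSet.omega (CohenTop A) ψ (fun _ => ∅) V
  | true :: bs, A, V => ∃ B : Set ℚ, B.Countable ∧ ∃ (e : A ↪o B)
      (σ : PName (CohenCond B)), LOGame ψ bs B (consF σ (fun n => transferName e (V n)))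
  | false :: bs, A, V => ∀ B : Set ℚ, B.Countable → ∀ (e : A ↪o B)
      (σ : PName (CohenCond B)), LOGame ψ bs B (consF σ (fun n => transferName e (V n)))

/-- `n` alternating second-order quantifiers (starting with `∃` if the flag is `true`)
prefixed to a matrix. -/
def altPrefix : Bool → ℕ → SOFormula → SOFormula
  | _, 0, ψ => ψ
  | true, n+1, ψ => .exSO (altPrefix false n ψ)
  | false, n+1, ψ => .allSO (altPrefix true n ψ)

/-- The corresponding list of quantifier flags. -/
def altBools : Bool → ℕ → List Bool
  | _, 0 => []
  | b, n+1 => b :: altBools (!b) n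

/-!
Call a `ℂ_Ω`-name `U` and a `ℂ_A`-name `V` agreeing (via `f : A ↪ Ω`) if `U` is dense below a
condition exactly when `V` is dense below its restriction to `A`. Restriction is a projection of
Cohen forcings, so agreeing names satisfy the same arithmetic statements at the top condition.
The quantifier rounds are matched in both directions. A `ℂ_B`-name played in the game is pulled
back to `ℂ_Ω` after extending `f` to `B`. Conversely, `ℂ_Ω` is ccc (it is σ-centred, as
`|Ω| ≤ 𝔠`), so a `ℂ_Ω`-name is decided on `ω` by countably many conditions and agrees with a
name over a countable `B ⊇ A` whose image under the extended `f` covers their supports. An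
existential witness at the top condition is obtained from the mixing lemma.
-/

open Set Function Cardinal

section Forcing

variable {P : Type*} [Preorder P]

def DenseBelow (σ : Set P) (p : P) : Prop := ∀ q ≤ p, ∃ r ≤ q, r ∈ σ

def Compatible (p q : P) : Prop := ∃ r, r ≤ p ∧ r ≤ q

theorem DenseBelow.mono {σ : Set P} {p q : P} (hp : DenseBelow σ p) (hqp : q ≤ p) :
    DenseBelow σ q :=
  fun r hr => hp r (hr.trans hqp)

theorem denseBelow_setOf_const {c : Prop} {p : P} : DenseBelow {_q | c} p ↔ c :=
  ⟨fun h => (h p le_rfl).choose_spec.2, fun hc q _ => ⟨q, le_rfl, hc⟩⟩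

theorem not_denseBelow_empty {p : P} : ¬DenseBelow ∅ p :=
  fun h => (h p le_rfl).choose_spec.2

variable {A : ZFSet.{0}}

theorem forces_mono {φ : SOFormula} {v : ℕ → ZFSet.{0}} {V : ℕ → PName P} {p q : P}
    (hp : Forces A p φ v V) (hqp : q ≤ p) : Forces A q φ v V := by
  induction φ generalizing v V with
  | memFF | eqFF => exact hp
  | memFS => exact ⟨hp.1, fun r hr => hp.2 r (hr.trans hqp)⟩
  | not | exFO | exSO => exact fun r hr => hp r (hr.trans hqp)
  | and φ χ ih₁ ih₂ => exact ⟨ih₁ hp.1, ih₂ hp.2⟩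
  | allFO φ ih => exact fun a ha => ih (hp a ha)
  | allSO φ ih => exact fun σ => ih (hp σ)

theorem forces_of_dense {φ : SOFormula} {v : ℕ → ZFSet.{0}} {V : ℕ → PName P} {p : P}
    (h : ∀ q ≤ p, ∃ r ≤ q, Forces A r φ v V) : Forces A p φ v V := by
  induction φ generalizing v V p with
  | memFF | eqFF => obtain ⟨r, -, hr⟩ := h p le_rfl; exact hr
  | memFS =>
    refine ⟨(h p le_rfl).choose_spec.2.1, fun q hq => ?_⟩
    obtain ⟨r, hrq, -, hr⟩ := h q hq
    obtain ⟨s, hsr, hs⟩ := hr r le_rfl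
    exact ⟨s, hsr.trans hrq, hs⟩
  | not φ =>
    intro q hq hφ
    obtain ⟨r, hrq, hr⟩ := h q hq
    exact hr r le_rfl (forces_mono hφ hrq)
  | exFO | exSO =>
    intro q hq
    obtain ⟨r, hrq, hr⟩ := h q hq
    obtain ⟨s, hsr, hs⟩ := hr r le_rfl
    exact ⟨s, hsr.trans hrq, hs⟩
  | and φ χ ih₁ ih₂ =>
    exact ⟨ih₁ fun q hq => (h q hq).imp fun _ hr => ⟨hr.1, hr.2.1⟩,
      ih₂ fun q hq => (h q hq).imp fun _ hr => ⟨hr.1, hr.2.2⟩⟩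
  | allFO φ ih => exact fun a ha => ih fun q hq => (h q hq).imp fun _ hr => ⟨hr.1, hr.2 a ha⟩
  | allSO φ ih => exact fun σ => ih fun q hq => (h q hq).imp fun _ hr => ⟨hr.1, hr.2 σ⟩

theorem forces_congr {φ : SOFormula} {v : ℕ → ZFSet.{0}} {V V' : ℕ → PName P} {p : P}
    (h : ∀ j, ∀ z ∈ A, ∀ q ≤ p, DenseBelow (V j z) q ↔ DenseBelow (V' j z) q) :
    Forces A p φ v V ↔ Forces A p φ v V' := by
  induction φ generalizing v V V' p with
  | memFF | eqFF => rfl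
  | memFS i j => exact and_congr_right fun hi => h j (v i) hi p le_rfl
  | not φ ih =>
    exact forall₂_congr fun q hq => not_congr <| ih fun j z hz r hr => h j z hz r (hr.trans hq)
  | and φ χ ih₁ ih₂ => exact and_congr (ih₁ h) (ih₂ h)
  | allFO φ ih => exact forall₂_congr fun a _ => ih h
  | exFO φ ih =>
    refine forall₂_congr fun q hq => exists_congr fun r => and_congr_right fun hr =>
      exists_congr fun a => and_congr_right fun _ => ih fun j z hz s hs => ?_
    exact h j z hz s (hs.trans (hr.trans hq))
  | allSO φ ih =>
    refine forall_congr' fun σ => ih fun j z hz q hq => ?_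
    cases j
    · rfl
    · exact h _ z hz q hq
  | exSO φ ih =>
    refine forall₂_congr fun q hq => exists_congr fun r => and_congr_right fun hr =>
      exists_congr fun σ => ih fun j z hz s hs => ?_
    cases j
    · rfl
    · exact h _ z hz s (hs.trans (hr.trans hq))

theorem exists_isAntichain_compatible (D : Set P) :
    ∃ X ⊆ D, IsAntichain Compatible X ∧ ∀ d ∈ D, ∃ x ∈ X, Compatible d x := by
  obtain ⟨X, ⟨hXD, hX⟩, hmax⟩ := zorn_subset {Y | Y ⊆ D ∧ IsAntichain Compatible Y}
    fun c hc hchain => ⟨⋃₀ c, ⟨sUnion_subset fun Y hY => (hc hY).1,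
      hchain.pairwise_sUnion.2 fun Y hY => (hc hY).2⟩, fun _ => subset_sUnion_of_mem⟩
  refine ⟨X, hXD, hX, fun d hd => ?_⟩
  by_contra! hd'
  have hins : insert d X ∈ {Y | Y ⊆ D ∧ IsAntichain Compatible Y} :=
    ⟨insert_subset hd hXD, hX.insert (fun x hx _ h => hd' x hx ⟨h.choose, h.choose_spec.symm⟩)
      fun x hx _ => hd' x hx⟩
  exact hd' d (hmax hins (subset_insert d X) (mem_insert d X)) ⟨d, le_rfl, le_rfl⟩

/-- The mixing lemma; the witnesses are glued along a maximal antichain. -/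
theorem exists_forces_of_dense {φ : SOFormula} {v : ℕ → ZFSet.{0}} {V : ℕ → PName P} {p : P}
    (h : ∀ q ≤ p, ∃ r ≤ q, ∃ σ : PName P, Forces A r φ v (consF σ V)) :
    ∃ σ : PName P, Forces A p φ v (consF σ V) := by
  obtain ⟨X, hXD, hX, hXmax⟩ := exists_isAntichain_compatible
    {r | ∃ σ : PName P, Forces A r φ v (consF σ V)}
  have : Nonempty (PName P) := ⟨emptyPName⟩
  choose! τ hτ using fun x (hx : x ∈ X) => hXD hx
  refine ⟨fun z => {s | ∃ x ∈ X, s ≤ x ∧ s ∈ τ x z}, forces_of_dense fun q hq => ?_⟩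
  obtain ⟨r, hrq, hr⟩ := h q hq
  obtain ⟨x, hx, s, hsr, hsx⟩ := hXmax r hr
  refine ⟨s, hsr.trans hrq, forces_mono ((forces_congr fun j z _ t ht => ?_).2 (hτ x hx)) hsx⟩
  -- below `x` the glued name is `τ x`, as no other member of `X` is compatible with `x`
  cases j
  · refine ⟨fun ht' u hu => ?_, fun ht' u hu => ?_⟩
    · obtain ⟨w, hwu, y, hy, hwy, hw⟩ := ht' u hu
      obtain rfl : y = x := by
        by_contra hyx
        exact hX hy hx hyx ⟨w, hwy, (hwu.trans hu).trans ht⟩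
      exact ⟨w, hwu, hw⟩
    · obtain ⟨w, hwu, hw⟩ := ht' u hu
      exact ⟨w, hwu, x, hx, (hwu.trans hu).trans ht, hw⟩
  · rfl

theorem forces_exSO_iff {φ : SOFormula} {v : ℕ → ZFSet.{0}} {V : ℕ → PName P} {p : P} :
    Forces A p (.exSO φ) v V ↔ ∃ σ : PName P, Forces A p φ v (consF σ V) :=
  ⟨exists_forces_of_dense, fun ⟨σ, hσ⟩ q hq => ⟨q, le_rfl, σ, forces_mono hσ hq⟩⟩

/-- `X` is a maximal antichain of conditions below which `σ` is dense. -/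
theorem exists_countable_denseBelow_iff
    (hccc : ∀ X : Set P, IsAntichain Compatible X → X.Countable) (σ : Set P) :
    ∃ X : Set P, X.Countable ∧ ∀ p, DenseBelow σ p ↔ DenseBelow (lowerClosure X) p := by
  obtain ⟨X, hXD, hX, hXmax⟩ := exists_isAntichain_compatible {p | DenseBelow σ p}
  refine ⟨X, hccc X hX, fun p => ⟨fun hp q hq => ?_, fun hp q hq => ?_⟩⟩
  · obtain ⟨x, hx, r, hrq, hrx⟩ := hXmax q (hp.mono hq)
    exact ⟨r, hrq, mem_lowerClosure.2 ⟨x, hx, hrx⟩⟩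
  · obtain ⟨r, hrq, x, hx, hrx⟩ := hp q hq
    obtain ⟨s, hsr, hs⟩ := hXD hx r hrx
    exact ⟨s, hsr.trans hrq, hs⟩

end Forcing

noncomputable section

namespace CohenCond

variable {X Y Z : Type}

def union (p q : CohenCond X) (h : ∀ a b b', (a, b) ∈ p.1 → (a, b') ∈ q.1 → b = b') :
    CohenCond X :=
  ⟨p.1 ∪ q.1, fun a b b' hb hb' => by
    rcases Finset.mem_union.1 hb with hb | hb <;> rcases Finset.mem_union.1 hb' with hb' | hb'
    exacts [p.2 a b b' hb hb', h a b b' hb hb', (h a b' b hb' hb).symm, q.2 a b b' hb hb']⟩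

theorem union_le_left {p q : CohenCond X} {h} : union p q h ≤ p := Finset.subset_union_left

theorem union_le_right {p q : CohenCond X} {h} : union p q h ≤ q := Finset.subset_union_right

theorem compatible_of_agree {p q : CohenCond X}
    (h : ∀ a b b', (a, b) ∈ p.1 → (a, b') ∈ q.1 → b = b') : Compatible p q :=
  ⟨union p q h, union_le_left, union_le_right⟩

def entryMap (f : X ↪ Y) : (X × ℕ) × Bool ↪ (Y × ℕ) × Bool :=
  (f.prodMap (.refl ℕ)).prodMap (.refl Bool)

def map (f : X ↪ Y) (p : CohenCond X) : CohenCond Y :=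
  ⟨p.1.map (entryMap f), fun a b b' hb hb' => by
    obtain ⟨⟨c, d⟩, hc, hcb⟩ := Finset.mem_map.1 hb
    obtain ⟨⟨c', d'⟩, hc', hcb'⟩ := Finset.mem_map.1 hb'
    simp only [entryMap, Embedding.coe_prodMap, Prod.map, Prod.mk.injEq] at hcb hcb'
    obtain rfl : c = c' := (f.prodMap (.refl ℕ)).injective (hcb.1.trans hcb'.1.symm)
    exact hcb.2 ▸ hcb'.2 ▸ p.2 c d d' hc hc'⟩

def comap (f : X ↪ Y) (Q : CohenCond Y) : CohenCond X :=
  ⟨Q.1.preimage (entryMap f) (entryMap f).injective.injOn, fun a b b' hb hb' => by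
    rw [Finset.mem_preimage] at hb hb'
    exact Q.2 _ b b' hb hb'⟩

def support (p : CohenCond X) : Finset X := p.1.image fun t => t.1.1

variable (f : X ↪ Y)

theorem mem_comap {Q : CohenCond Y} {s : (X × ℕ) × Bool} :
    s ∈ (comap f Q).1 ↔ entryMap f s ∈ Q.1 :=
  Finset.mem_preimage (hf := (entryMap f).injective.injOn)

theorem comap_mono {Q Q' : CohenCond Y} (h : Q' ≤ Q) : comap f Q' ≤ comap f Q :=
  fun _ hs => (mem_comap f).2 (h ((mem_comap f).1 hs))

theorem le_map_iff {R : CohenCond Y} {p : CohenCond X} : R ≤ map f p ↔ comap f R ≤ p :=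
  show (map f p).1 ⊆ R.1 ↔ p.1 ⊆ (comap f R).1 from Finset.map_subset_iff_subset_preimage

theorem comap_top : comap f (CohenTop Y) = CohenTop X :=
  Subtype.ext (Finset.ext fun s => by rw [mem_comap]; simp [CohenTop])

theorem comap_comap (g : Y ↪ Z) (Q : CohenCond Z) :
    comap f (comap g Q) = comap (f.trans g) Q :=
  Subtype.ext (Finset.ext fun _ => by simp only [mem_comap]; rfl)

theorem map_comap_of_support_subset {Q : CohenCond Y} (h : ↑(support Q) ⊆ range f) :
    map f (comap f Q) = Q := by
  refine Subtype.ext (Finset.ext fun t => ⟨fun ht => ?_, fun ht => ?_⟩)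
  · obtain ⟨s, hs, rfl⟩ := Finset.mem_map.1 ht
    exact (mem_comap f).1 hs
  · obtain ⟨x, hx⟩ := h (Finset.mem_image_of_mem _ ht)
    refine Finset.mem_map.2 ⟨((x, t.1.2), t.2), (mem_comap f).2 ?_, ?_⟩
    · simpa [entryMap, hx] using ht
    · simp [entryMap, hx]

theorem exists_le_comap_eq {Q : CohenCond Y} {q : CohenCond X} (h : q ≤ comap f Q) :
    ∃ R ≤ Q, comap f R = q := by
  have hagree : ∀ a b b', (a, b) ∈ Q.1 → (a, b') ∈ (map f q).1 → b = b' := by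
    intro a b b' hb hb'
    obtain ⟨⟨c, d⟩, hc, hcb⟩ := Finset.mem_map.1 hb'
    simp only [entryMap, Embedding.coe_prodMap, Prod.map, Prod.mk.injEq] at hcb
    obtain ⟨rfl, rfl⟩ := hcb
    exact q.2 c b d (h ((mem_comap f).2 hb)) hc
  refine ⟨union Q (map f q) hagree, union_le_left, Subtype.ext (subset_antisymm ?_ ?_)⟩
  · exact fun s hs => ((mem_comap f).1 hs |> Finset.mem_union.1).elim
      (fun h' => h ((mem_comap f).2 h')) fun h' => (Finset.mem_map' _).1 h'
  · exact (le_map_iff f).1 union_le_right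

theorem forall_le_comap_iff {Q : CohenCond Y} {Φ : CohenCond X → Prop} :
    (∀ R ≤ Q, Φ (comap f R)) ↔ ∀ q ≤ comap f Q, Φ q := by
  refine ⟨fun h q hq => ?_, fun h R hR => h _ (comap_mono f hR)⟩
  obtain ⟨R, hR, rfl⟩ := exists_le_comap_eq f hq
  exact h R hR

theorem exists_le_comap_iff {Q : CohenCond Y} {Φ : CohenCond X → Prop} :
    (∃ R ≤ Q, Φ (comap f R)) ↔ ∃ q ≤ comap f Q, Φ q := by
  refine ⟨fun ⟨R, hR, hΦ⟩ => ⟨_, comap_mono f hR, hΦ⟩, fun ⟨q, hq, hΦ⟩ => ?_⟩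
  obtain ⟨R, hR, rfl⟩ := exists_le_comap_eq f hq
  exact ⟨R, hR, hΦ⟩

theorem denseBelow_preimage_comap (σ : Set (CohenCond X)) (Q : CohenCond Y) :
    DenseBelow (comap f ⁻¹' σ) Q ↔ DenseBelow σ (comap f Q) := by
  unfold DenseBelow
  simp only [mem_preimage, exists_le_comap_iff,
    forall_le_comap_iff f (Φ := fun q => ∃ r ≤ q, r ∈ σ)]

theorem mem_lowerClosure_iff_comap_mem {σ : Set (CohenCond Y)}
    (hσ : ∀ x ∈ σ, ↑(support x) ⊆ range f) {R : CohenCond Y} :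
    R ∈ lowerClosure σ ↔ comap f R ∈ lowerClosure (comap f '' σ) := by
  simp only [mem_lowerClosure, exists_mem_image, ← le_map_iff]
  refine exists_congr fun x => and_congr_right fun hx => ?_
  rw [map_comap_of_support_subset f (hσ x hx)]

omit f in
theorem mem_support {p : CohenCond X} {t : (X × ℕ) × Bool} (ht : t ∈ p.1) :
    t.1.1 ∈ (support p : Set X) :=
  Finset.mem_image_of_mem _ ht

omit f in
theorem compatible_of_image_eq [DecidableEq Z] {g : X → Z} {p q : CohenCond X}
    (hq : InjOn g (support q))
    (h : p.1.image (fun t => ((g t.1.1, t.1.2), t.2)) =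
      q.1.image (fun t => ((g t.1.1, t.1.2), t.2))) : Compatible p q := by
  refine compatible_of_agree fun a b b' hb hb' => ?_
  obtain ⟨t, ht, hta⟩ := Finset.mem_image.1 (h ▸ Finset.mem_image_of_mem _ hb)
  simp only [Prod.mk.injEq] at hta
  obtain ⟨⟨hga, hn⟩, rfl⟩ := hta
  obtain rfl : t.1 = a := Prod.ext (hq (mem_support ht) (mem_support hb') hga) hn
  exact q.2 _ _ b' ht hb'

end CohenCond

def codePrefix {Y : Type} (j : Y ↪ Set ℕ) (m : ℕ) (y : Y) : Finset ℕ :=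
  (Finset.range m).filter (· ∈ j y)

theorem exists_injOn_codePrefix {Y : Type} (j : Y ↪ Set ℕ) (s : Finset Y) :
    ∃ m, InjOn (codePrefix j m) s := by
  have key : ∀ y ∈ s ×ˢ s,
      ∀ᶠ m in Filter.atTop, codePrefix j m y.1 = codePrefix j m y.2 → y.1 = y.2 := by
    rintro ⟨y, y'⟩ -
    by_cases h : y = y'
    · exact .of_forall fun _ _ => h
    obtain ⟨k, hk⟩ := not_forall.1 (mt Set.ext (j.injective.ne h))
    filter_upwards [Filter.eventually_gt_atTop k] with m hm heq
    exact absurd (by simpa [codePrefix, hm] using congrArg (k ∈ ·) heq) hk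
  obtain ⟨m, hm⟩ := ((Filter.eventually_all_finset _).2 key).exists
  exact ⟨m, fun y hy y' hy' h => hm (y, y') (Finset.mem_product.2 ⟨hy, hy'⟩) h⟩

/-- `ℂ_Y` is σ-centred: conditions with the same shape, once the codes of their supports are
codePrefixd far enough to stay apart, are compatible. -/
theorem CohenCond.countable_of_isAntichain {Y : Type} (hY : #Y ≤ 𝔠)
    {X : Set (CohenCond Y)} (hX : IsAntichain Compatible X) : X.Countable := by
  obtain ⟨j⟩ := (le_def _ _).1 (hY.trans_eq mk_set_nat.symm)
  choose m hm using fun p : CohenCond Y => exists_injOn_codePrefix j (support p)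
  let shape (p : CohenCond Y) :=
    (m p, p.1.image fun t => ((codePrefix j (m p) t.1.1, t.1.2), t.2))
  refine (mapsTo_univ shape X).countable_of_injOn (fun p hp q hq hpq => ?_) countable_univ
  by_contra hne
  obtain ⟨hmpq, himg⟩ := Prod.mk.inj hpq
  exact hX hp hq hne (compatible_of_image_eq (hm q) (hmpq ▸ himg))

end

theorem mapCohenCond_eq_map {A B : Set ℚ} (e : A ↪o B) (p : CohenCond A) :
    mapCohenCond e p = CohenCond.map e.toEmbedding p :=
  Subtype.ext (by simp [mapCohenCond, CohenCond.map, CohenCond.entryMap, Finset.map_eq_image]; rfl)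

theorem transferName_eq {A B : Set ℚ} (e : A ↪o B) (σ : PName (CohenCond A)) :
    transferName e σ = fun z => CohenCond.comap e.toEmbedding ⁻¹' lowerClosure (σ z) := by
  funext z
  ext q
  simp only [transferName, mapCohenCond_eq_map, mem_preimage, SetLike.mem_coe,
    mem_lowerClosure, ← CohenCond.le_map_iff]
  rfl

def NamesAgree {X Y : Type} (f : X ↪ Y) (U : ℕ → PName (CohenCond Y))
    (V : ℕ → PName (CohenCond X)) : Prop :=
  ∀ n, ∀ z ∈ ZFSet.omega, ∀ Q, DenseBelow (U n z) Q ↔ DenseBelow (V n z) (CohenCond.comap f Q)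

namespace NamesAgree

variable {X Y : Type} {f : X ↪ Y} {U : ℕ → PName (CohenCond Y)} {V : ℕ → PName (CohenCond X)}

theorem cons {σ : PName (CohenCond Y)} {τ : PName (CohenCond X)}
    (hστ : ∀ z ∈ ZFSet.omega, ∀ Q, DenseBelow (σ z) Q ↔ DenseBelow (τ z) (CohenCond.comap f Q))
    (h : NamesAgree f U V) : NamesAgree f (consF σ U) (consF τ V)
  | 0 => hστ
  | n + 1 => h n

theorem cons_preimage_comap (h : NamesAgree f U V) (τ : PName (CohenCond X)) :
    NamesAgree f (consF (fun z => CohenCond.comap f ⁻¹' τ z) U) (consF τ V) :=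
  h.cons fun _ _ => CohenCond.denseBelow_preimage_comap f _

theorem transfer {A B : Set ℚ} {Ω : Type} {f : A ↪ Ω} {V : ℕ → PName (CohenCond A)}
    {U : ℕ → PName (CohenCond Ω)} (h : NamesAgree f U V) (hV : ∀ n z, IsLowerSet (V n z))
    (e : A ↪o B) (g : B ↪ Ω) (hge : e.toEmbedding.trans g = f) :
    NamesAgree g U fun n => transferName e (V n) := by
  intro n z hz Q
  show _ ↔ DenseBelow (_root_.transferName e (V n) z) _
  rw [h n z hz, transferName_eq, CohenCond.denseBelow_preimage_comap, (hV n z).lowerClosure,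
    CohenCond.comap_comap, hge]

theorem forces_iff {φ : SOFormula} (hφ : NoSOQuant φ) (h : NamesAgree f U V)
    {v : ℕ → ZFSet.{0}} (Q : CohenCond Y) :
    Forces ZFSet.omega Q φ v U ↔ Forces ZFSet.omega (CohenCond.comap f Q) φ v V := by
  induction φ generalizing v Q with
  | memFF | eqFF => rfl
  | memFS i j => exact and_congr_right fun hi => h j (v i) hi Q
  | not φ ih =>
    exact (forall₂_congr fun R _ => not_congr (ih hφ R)).trans
      (CohenCond.forall_le_comap_iff f (Φ := fun q => ¬Forces _ q φ v V))
  | and φ χ ih₁ ih₂ => exact and_congr (ih₁ hφ.1 Q) (ih₂ hφ.2 Q)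
  | allFO φ ih => exact forall₂_congr fun a _ => ih hφ Q
  | exFO φ ih =>
    refine (forall₂_congr fun R _ => ?_).trans (CohenCond.forall_le_comap_iff f
      (Φ := fun q => ∃ r ≤ q, ∃ a, a ∈ ZFSet.omega ∧ Forces _ r φ (consF a v) V))
    exact (exists_congr fun R' => and_congr_right fun _ => exists_congr fun a =>
      and_congr_right fun _ => ih hφ R').trans (CohenCond.exists_le_comap_iff f
        (Φ := fun r => ∃ a, a ∈ ZFSet.omega ∧ Forces _ r φ (consF a v) V))
  | allSO | exSO => exact hφ.elim

end NamesAgree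

theorem Set.Countable.infinite_compl {Ω : Type} {s : Set Ω} (hs : s.Countable) (hΩ : ℵ₀ < #Ω) :
    sᶜ.Infinite := fun hfin => by
  have := hs.union hfin.countable
  rw [union_compl_self, countable_univ_iff, ← mk_le_aleph0_iff] at this
  exact hΩ.not_ge this

section Extension

variable {α β Ω : Type}

theorem exists_embedding_extend_of_compl (e : α ↪ β) (f : α ↪ Ω)
    (h : ↥(range e)ᶜ ↪ ↥(range f)ᶜ) :
    ∃ g : β ↪ Ω, e.trans g = f ∧ ∀ x : ↥(range e)ᶜ, g x = h x := by
  let g₀ : range e ⊕ ↥(range e)ᶜ → Ω :=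
    Sum.elim (f ∘ (Equiv.ofInjective e e.injective).symm) fun x => h x
  have hg₀ : Injective g₀ := by
    refine (f.injective.comp (Equiv.injective _)).sumElim
      (Subtype.val_injective.comp h.injective) fun a x hax => (h x).2 ⟨_, hax⟩
  refine ⟨⟨g₀ ∘ (Equiv.Set.sumCompl (range e)).symm, hg₀.comp (Equiv.injective _)⟩, ?_,
    fun x => ?_⟩
  · ext a
    simp [g₀, Equiv.Set.sumCompl_symm_apply_of_mem (mem_range_self a)]
  · simp [g₀, Equiv.Set.sumCompl_symm_apply_of_notMem x.2]

theorem exists_embedding_extend [Countable β] (hΩ : ℵ₀ < #Ω) (e : α ↪ β) (f : α ↪ Ω) :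
    ∃ g : β ↪ Ω, e.trans g = f := by
  have : Countable α := e.injective.countable
  have : Infinite ↥(range f)ᶜ := ((countable_range f).infinite_compl hΩ).to_subtype
  obtain ⟨h⟩ := (le_def _ _).1 ((mk_le_aleph0 (α := ↥(range e)ᶜ)).trans (infinite_iff.1 this))
  obtain ⟨g, hg, -⟩ := exists_embedding_extend_of_compl e f h
  exact ⟨g, hg⟩

theorem exists_embedding_extend_of_infinite [Countable β] (hΩ : ℵ₀ < #Ω) (e : α ↪ β)
    (he : (range e)ᶜ.Infinite) (f : α ↪ Ω) {S : Set Ω} (hS : S.Countable) :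
    ∃ g : β ↪ Ω, e.trans g = f ∧ S ⊆ range g := by
  have : Countable α := e.injective.countable
  have hfS := (((countable_range f).union hS).infinite_compl hΩ).to_subtype
  let C := S \ range f ∪ range (Subtype.val ∘ Infinite.natEmbedding ↥(range f ∪ S)ᶜ)
  have hCf : C ⊆ (range f)ᶜ := by
    rintro _ (⟨-, hy⟩ | ⟨n, rfl⟩)
    exacts [hy, fun hy => (Infinite.natEmbedding ↥(range f ∪ S)ᶜ n).2 (Or.inl hy)]
  have : Countable C := ((hS.mono sdiff_subset).union (countable_range _)).to_subtype
  have : Infinite C := (infinite_range_of_injective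
    (Subtype.val_injective.comp (Infinite.natEmbedding _).injective)).mono subset_union_right
    |>.to_subtype
  have : Infinite ↥(range e)ᶜ := he.to_subtype
  obtain ⟨u⟩ := nonempty_equiv_of_countable (α := ↥(range e)ᶜ) (β := C)
  obtain ⟨g, hg, hgu⟩ := exists_embedding_extend_of_compl e f
    (u.toEmbedding.trans (Set.embeddingOfSubset _ _ hCf))
  refine ⟨g, hg, fun s hs => ?_⟩
  by_cases hsf : s ∈ range f
  · obtain ⟨a, rfl⟩ := hsf
    exact ⟨e a, DFunLike.congr_fun hg a⟩
  · refine ⟨u.symm ⟨s, Or.inl ⟨hs, hsf⟩⟩, ?_⟩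
    simp [hgu]

end Extension

theorem exists_orderEmbedding_univ_infinite_compl (A : Set ℚ) :
    ∃ e : A ↪o (univ : Set ℚ), (range e)ᶜ.Infinite := by
  obtain ⟨h⟩ := Order.embedding_from_countable_to_dense A (Iio (0 : ℚ))
  refine ⟨h.trans ((OrderEmbedding.subtype _).trans OrderIso.Set.univ.symm.toOrderEmbedding),
    infinite_of_injective_forall_mem (f := fun n : ℕ => (⟨n, trivial⟩ : (univ : Set ℚ)))
      (fun m n hmn => by simpa using congrArg Subtype.val hmn) fun n ⟨a, ha⟩ => ?_⟩
  have hlt : ((h a : Iio (0 : ℚ)) : ℚ) < 0 := (h a).2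
  have heq : ((h a : Iio (0 : ℚ)) : ℚ) = n := congrArg Subtype.val ha
  linarith [n.cast_nonneg (α := ℚ)]

theorem exists_orderEmbedding_embedding_extend {Ω : Type} (hΩ : ℵ₀ < #Ω) {A : Set ℚ} (f : A ↪ Ω)
    {S : Set Ω} (hS : S.Countable) :
    ∃ (B : Set ℚ) (e : A ↪o B) (g : B ↪ Ω), e.toEmbedding.trans g = f ∧ S ⊆ range g := by
  obtain ⟨e, he⟩ := exists_orderEmbedding_univ_infinite_compl A
  obtain ⟨g, hg, hSg⟩ := exists_embedding_extend_of_infinite hΩ e.toEmbedding he f hS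
  exact ⟨univ, e, g, hg, hSg⟩

theorem ZFSet.countable_setOf_mem_omega : {z : ZFSet.{0} | z ∈ ZFSet.omega}.Countable := by
  refine (countable_range fun n : ℕ => ZFSet.mk (PSet.ofNat n)).mono fun z hz => ?_
  obtain ⟨x, rfl⟩ := Quotient.exists_rep z
  obtain ⟨⟨n⟩, hn⟩ := ZFSet.mk_mem_iff.1 hz
  exact ⟨n, (ZFSet.sound hn).symm⟩

theorem exists_agreeing_lowerSet_name {Ω : Type} (hΩ : ℵ₀ < #Ω) (hΩc : #Ω ≤ 𝔠) {A : Set ℚ}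
    (f : A ↪ Ω) (σ : PName (CohenCond Ω)) :
    ∃ (B : Set ℚ) (e : A ↪o B) (g : B ↪ Ω) (τ : PName (CohenCond B)),
      e.toEmbedding.trans g = f ∧ (∀ z, IsLowerSet (τ z)) ∧
      ∀ z ∈ ZFSet.omega, ∀ Q, DenseBelow (σ z) Q ↔ DenseBelow (τ z) (CohenCond.comap g Q) := by
  choose X hXc hX using fun z => exists_countable_denseBelow_iff
    (fun _ => CohenCond.countable_of_isAntichain hΩc) (σ z)
  obtain ⟨B, e, g, hg, hS⟩ := exists_orderEmbedding_embedding_extend hΩ f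
    (S := ⋃ z ∈ {z | z ∈ ZFSet.omega}, ⋃ x ∈ X z, ↑(CohenCond.support x))
    (ZFSet.countable_setOf_mem_omega.biUnion fun z _ =>
      (hXc z).biUnion fun x _ => (CohenCond.support x).countable_toSet)
  refine ⟨B, e, g, fun z => lowerClosure (CohenCond.comap g '' X z), hg,
    fun z => (lowerClosure _).lower, fun z hz Q => ?_⟩
  have hsupp : ∀ x ∈ X z, ↑(CohenCond.support x) ⊆ range g :=
    fun x hx y hy => hS (mem_iUnion₂.2 ⟨z, hz, mem_iUnion₂.2 ⟨x, hx, hy⟩⟩)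
  rw [hX, ← CohenCond.denseBelow_preimage_comap]
  exact Iff.of_eq (congrArg (DenseBelow · Q)
    (Set.ext fun R => CohenCond.mem_lowerClosure_iff_comap_mem g hsupp))

theorem isLowerSet_transferName {A B : Set ℚ} (e : A ↪o B) (σ : PName (CohenCond A)) (z : ZFSet) :
    IsLowerSet (transferName e σ z) := by
  rw [transferName_eq]
  exact (lowerClosure (σ z)).lower.preimage fun _ _ => CohenCond.comap_mono _

theorem isLowerSet_consF_transferName {A B : Set ℚ} (e : A ↪o B) {τ : PName (CohenCond B)}
    (hτ : ∀ z, IsLowerSet (τ z)) (V : ℕ → PName (CohenCond A)) :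
    ∀ n z, IsLowerSet (consF τ (fun k => transferName e (V k)) n z)
  | 0, z => hτ z
  | _ + 1, z => isLowerSet_transferName e _ z

theorem LOGame_cons_lowerClosure_iff (ψ : SOFormula) (b : Bool) (bs : List Bool) {B : Set ℚ}
    (σ : PName (CohenCond B)) (W : ℕ → PName (CohenCond B)) :
    LOGame ψ (b :: bs) B (consF (fun z => lowerClosure (σ z)) W) ↔
      LOGame ψ (b :: bs) B (consF σ W) := by
  have hW : ∀ (B' : Set ℚ) (e : B ↪o B'),
      (fun n => transferName e (consF (fun z => lowerClosure (σ z)) W n)) =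
        fun n => transferName e (consF σ W n) := by
    intro B' e
    funext n
    cases n
    · refine (transferName_eq e _).trans (.trans (funext fun z => ?_) (transferName_eq e σ).symm)
      exact congrArg (fun s : LowerSet _ => CohenCond.comap e.toEmbedding ⁻¹' s)
        (LowerSet.lowerClosure (lowerClosure (σ z)))
    · rfl
  cases b <;> simp only [LOGame, hW]

theorem exists_isLowerSet_LOGame_iff (ψ : SOFormula) (bs : List Bool) {B : Set ℚ}
    (σ : PName (CohenCond B)) (W : ℕ → PName (CohenCond B)) :
    ∃ σ' : PName (CohenCond B), (bs ≠ [] → ∀ z, IsLowerSet (σ' z)) ∧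
      (LOGame ψ bs B (consF σ' W) ↔ LOGame ψ bs B (consF σ W)) := by
  cases bs with
  | nil => exact ⟨σ, fun h => (h rfl).elim, Iff.rfl⟩
  | cons b bs => exact ⟨fun z => lowerClosure (σ z), fun _ z => (lowerClosure _).lower,
      LOGame_cons_lowerClosure_iff ψ b bs σ W⟩

/-- The invariant of the induction. Names still to be transferred must be lower sets, since
`transferName` only sees the downward closure of a name. -/
def ForcesIffLOGame (Ω : Type) (φ ψ : SOFormula) (bs : List Bool) : Prop :=
  ∀ (A : Set ℚ) (f : A ↪ Ω) (U : ℕ → PName (CohenCond Ω)) (V : ℕ → PName (CohenCond A)),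
    NamesAgree f U V → (bs ≠ [] → ∀ n z, IsLowerSet (V n z)) →
    (Forces ZFSet.omega (CohenTop Ω) φ (fun _ => ∅) U ↔ LOGame ψ bs A V)

theorem forcesIffLOGame_nil {Ω : Type} {ψ : SOFormula} (hψ : NoSOQuant ψ) :
    ForcesIffLOGame Ω ψ ψ [] := fun _ f _ _ h _ => by
  rw [h.forces_iff hψ, CohenCond.comap_top]
  rfl

namespace ForcesIffLOGame

variable {Ω : Type} {φ ψ : SOFormula} {bs : List Bool} {A : Set ℚ} {f : A ↪ Ω}
  {U : ℕ → PName (CohenCond Ω)} {V : ℕ → PName (CohenCond A)}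

theorem exists_LOGame_iff (h : ForcesIffLOGame Ω φ ψ bs) (hΩ : ℵ₀ < #Ω) (hΩc : #Ω ≤ 𝔠)
    (hUV : NamesAgree f U V) (hV : ∀ n z, IsLowerSet (V n z)) (σ : PName (CohenCond Ω)) :
    ∃ (B : Set ℚ) (e : A ↪o B) (τ : PName (CohenCond B)),
      Forces ZFSet.omega (CohenTop Ω) φ (fun _ => ∅) (consF σ U) ↔
        LOGame ψ bs B (consF τ fun n => transferName e (V n)) := by
  obtain ⟨B, e, g, τ, hg, hτ, hστ⟩ := exists_agreeing_lowerSet_name hΩ hΩc f σ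
  exact ⟨B, e, τ, h B g _ _ ((hUV.transfer hV e g hg).cons hστ)
    fun _ => isLowerSet_consF_transferName e hτ V⟩

theorem exists_forces_iff (h : ForcesIffLOGame Ω φ ψ bs) (hΩ : ℵ₀ < #Ω)
    (hUV : NamesAgree f U V) (hV : ∀ n z, IsLowerSet (V n z)) {B : Set ℚ} (e : A ↪o B)
    (σ : PName (CohenCond B)) :
    ∃ σ' : PName (CohenCond Ω),
      Forces ZFSet.omega (CohenTop Ω) φ (fun _ => ∅) (consF σ' U) ↔
        LOGame ψ bs B (consF σ fun n => transferName e (V n)) := by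
  obtain ⟨g, hg⟩ := exists_embedding_extend hΩ e.toEmbedding f
  obtain ⟨τ, hτ, hστ⟩ := exists_isLowerSet_LOGame_iff ψ bs σ fun n => transferName e (V n)
  exact ⟨_, (h B g _ _ ((hUV.transfer hV e g hg).cons_preimage_comap τ)
    fun hbs => isLowerSet_consF_transferName e (hτ hbs) V).trans hστ⟩

theorem exSO (h : ForcesIffLOGame Ω φ ψ bs) (hΩ : ℵ₀ < #Ω) (hΩc : #Ω ≤ 𝔠) :
    ForcesIffLOGame Ω (.exSO φ) ψ (true :: bs) := by
  intro A f U V hUV hV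
  replace hV := hV (List.cons_ne_nil _ _)
  rw [forces_exSO_iff]
  constructor
  · rintro ⟨σ, hσ⟩
    obtain ⟨B, e, τ, hτ⟩ := h.exists_LOGame_iff hΩ hΩc hUV hV σ
    exact ⟨B, B.to_countable, e, τ, hτ.1 hσ⟩
  · rintro ⟨B, -, e, σ, hσ⟩
    obtain ⟨σ', hσ'⟩ := h.exists_forces_iff hΩ hUV hV e σ
    exact ⟨σ', hσ'.2 hσ⟩

theorem allSO (h : ForcesIffLOGame Ω φ ψ bs) (hΩ : ℵ₀ < #Ω) (hΩc : #Ω ≤ 𝔠) :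
    ForcesIffLOGame Ω (.allSO φ) ψ (false :: bs) := by
  intro A f U V hUV hV
  replace hV := hV (List.cons_ne_nil _ _)
  constructor
  · intro hF B _ e σ
    obtain ⟨σ', hσ'⟩ := h.exists_forces_iff hΩ hUV hV e σ
    exact hσ'.1 (hF σ')
  · intro hG σ
    obtain ⟨B, e, τ, hτ⟩ := h.exists_LOGame_iff hΩ hΩc hUV hV σ
    exact hτ.2 (hG B B.to_countable e τ)

end ForcesIffLOGame

theorem forcesIffLOGame_altPrefix {Ω : Type} (hΩ : ℵ₀ < #Ω) (hΩc : #Ω ≤ 𝔠) {ψ : SOFormula}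
    (hψ : NoSOQuant ψ) : ∀ n b, ForcesIffLOGame Ω (altPrefix b n ψ) ψ (altBools b n)
  | 0, false | 0, true => forcesIffLOGame_nil hψ
  | n + 1, true => (forcesIffLOGame_altPrefix hΩ hΩc hψ n false).exSO hΩ hΩc
  | n + 1, false => (forcesIffLOGame_altPrefix hΩ hΩc hψ n true).allSO hΩ hΩc

theorem NamesAgree.consF_checkPName {X Y : Type} (f : X ↪ Y) (x : ZFSet.{0}) :
    NamesAgree f (consF (checkPName x) fun _ => emptyPName)
      (consF (checkPName x) fun _ => emptyPName)
  | 0, _, _, _ => denseBelow_setOf_const.trans denseBelow_setOf_const.symm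
  | _ + 1, _, _, _ => iff_of_false not_denseBelow_empty not_denseBelow_empty

theorem isLowerSet_consF_checkPName {P : Type*} [Preorder P] (x : ZFSet.{0}) :
    ∀ n z, IsLowerSet ((consF (checkPName x) fun _ => emptyPName : ℕ → PName P) n z)
  | 0, _ => fun _ _ _ h => h
  | _ + 1, _ => isLowerSet_empty

/-- Let `r ∈ 2^ω` and `n < ω`. (1) If `φ` is a `Σ¹ₙ` formula
`∃y₀∀y₁⋯ψ(x, y₀, y₁, …)` with `ψ` arithmetic, then `ℂ_{ω₁}` forces `φ(ř)` iff there is a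
countable linear order `A₀` and a `ℂ_{A₀}`-name `ẏ₀` such that for every countable linear
order `A₁ ≥ A₀` and every `ℂ_{A₁}`-name `ẏ₁` there is a countable linear order `A₂ ≥ A₁`
and a `ℂ_{A₂}`-name `ẏ₂` such that …, such that the maximal condition of `ℂ_{A_{n-1}}`
forces `ψ(ř, ẏ₀, ẏ₁, …)`. (2) Dually for `Π¹ₙ` formulas `∀y₀∃y₁⋯ψ`. -/
theorem cohen_omega1_names_linear_orders (r : ZFSet.{0}) (hr : r ⊆ ZFSet.omega)
    (n : ℕ) (ψ : SOFormula) (hψ : NoSOQuant ψ) :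
    (CohenForcesProjTop (Cardinal.aleph 1).out (altPrefix true n ψ) r ↔
      LOGame ψ (altBools true n) ∅ (consF (checkPName r) (fun _ => emptyPName))) ∧
    (CohenForcesProjTop (Cardinal.aleph 1).out (altPrefix false n ψ) r ↔
      LOGame ψ (altBools false n) ∅ (consF (checkPName r) (fun _ => emptyPName))) := by
  have hΩ : ℵ₀ < #(aleph 1).out := (mk_out _).symm ▸ aleph0_lt_aleph_one
  have hΩc : #(aleph 1).out ≤ 𝔠 := (mk_out _).symm ▸ aleph_one_le_continuum
  have hstart b := forcesIffLOGame_altPrefix hΩ hΩc hψ n b ∅ Embedding.ofIsEmpty _ _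
    (NamesAgree.consF_checkPName _ r) fun _ => isLowerSet_consF_checkPName r
  exact ⟨hstart true, hstart false⟩
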